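/- arXiv:1909.07889 — 4 statements merged into one kernel-verified Lean document; each statement's English description precedes it below -/
import Mathlib

section
/- Let G be the CDF of a real-valued random variable V with Lipschitz constant W = sup_{x1≠x2} |G(x1)−G(x2)|/|x1−x2| < ∞. Let a_1,...,a_n and b_1,...,b_n be reals, let δ > 0, A = {t : |a_t − b_t| ≥ δ}, Ĝ(x) = n^{-1}∑_t 1{a_t < x}, G̃(x) = n^{-1}∑_t 1{b_t < x}, and R = sup_x |G̃(x) − G(x)|. Then sup_{x∈ℝ} |Ĝ(x) − G̃(x)| ≤ 2|A|/n + 2δW + 2R. -/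
open Finset

/-- Key deterministic bound: the empirical CDF of the estimated scores `a` is uniformly
close to the empirical CDF of the oracle scores `b`, up to the fraction of badly
estimated indices, a Lipschitz term `2δW`, and the uniform deviation `R` of the oracle
empirical CDF from the Lipschitz CDF `G`. -/
theorem stmt2 (n : ℕ) (hn : 0 < n) (a b : ℕ → ℝ) (δ W R : ℝ) (hδ : 0 < δ)
    (G : ℝ → ℝ) (hGmono : Monotone G)
    (hW : ∀ x1 x2 : ℝ, |G x1 - G x2| ≤ W * |x1 - x2|)
    (A : Finset ℕ) (hA : A = (range n).filter fun t => δ ≤ |a t - b t|)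
    (hR : ∀ x : ℝ, |(n:ℝ)⁻¹ * ∑ t ∈ range n, (if b t < x then (1:ℝ) else 0) - G x| ≤ R) :
    ∀ x : ℝ,
      |(n:ℝ)⁻¹ * ∑ t ∈ range n, (if a t < x then (1:ℝ) else 0)
        - (n:ℝ)⁻¹ * ∑ t ∈ range n, (if b t < x then (1:ℝ) else 0)|
      ≤ 2 * (A.card : ℝ) / n + 2 * δ * W + 2 * R := by
  intro x
  have hn' : (0 : ℝ) < n := by exact_mod_cast hn
  have hninv : (0 : ℝ) < (n : ℝ)⁻¹ := inv_pos.mpr hn'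
  have hWnn : 0 ≤ W := by
    have h := hW 0 1
    have h0 : (0:ℝ) ≤ |G 0 - G 1| := abs_nonneg _
    simp at h
    linarith
  have hRnn : 0 ≤ R := le_trans (abs_nonneg _) (hR 0)
  have hcard : (A.card : ℝ) = ∑ t ∈ range n, (if δ ≤ |a t - b t| then (1:ℝ) else 0) := by
    rw [hA, Finset.sum_boole]
  -- pointwise comparisons
  have key1 : ∑ t ∈ range n, (if a t < x then (1:ℝ) else 0)
      ≤ ∑ t ∈ range n, (if b t < x + δ then (1:ℝ) else 0) + (A.card : ℝ) := by
    rw [hcard, ← Finset.sum_add_distrib]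
    apply Finset.sum_le_sum
    intro t _
    by_cases hbad : δ ≤ |a t - b t|
    · by_cases h2 : b t < x + δ <;> by_cases h3 : a t < x <;> simp [hbad, h2, h3] <;> norm_num
    · have hlt : |a t - b t| < δ := lt_of_not_ge hbad
      by_cases h3 : a t < x
      · have : b t < x + δ := by
          have := abs_lt.mp hlt
          linarith [this.1, this.2]
        simp [h3, this, hbad]
      · simp [h3]
        positivity
  have key2 : ∑ t ∈ range n, (if b t < x - δ then (1:ℝ) else 0)
      ≤ ∑ t ∈ range n, (if a t < x then (1:ℝ) else 0) + (A.card : ℝ) := by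
    rw [hcard, ← Finset.sum_add_distrib]
    apply Finset.sum_le_sum
    intro t _
    by_cases hbad : δ ≤ |a t - b t|
    · by_cases h2 : b t < x - δ <;> by_cases h3 : a t < x <;> simp [hbad, h2, h3] <;> norm_num
    · have hlt : |a t - b t| < δ := lt_of_not_ge hbad
      by_cases h2 : b t < x - δ
      · have : a t < x := by
          have := abs_lt.mp hlt
          linarith [this.1, this.2]
        simp [h2, this, hbad]
      · simp [h2]
        positivity
  -- scaled versions
  have h1 : (n:ℝ)⁻¹ * ∑ t ∈ range n, (if a t < x then (1:ℝ) else 0)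
      ≤ (n:ℝ)⁻¹ * ∑ t ∈ range n, (if b t < x + δ then (1:ℝ) else 0)
      + (A.card : ℝ) / n := by
    rw [div_eq_inv_mul]
    nlinarith [key1, hninv]
  have h2 : (n:ℝ)⁻¹ * ∑ t ∈ range n, (if b t < x - δ then (1:ℝ) else 0)
      ≤ (n:ℝ)⁻¹ * ∑ t ∈ range n, (if a t < x then (1:ℝ) else 0) + (A.card : ℝ) / n := by
    rw [div_eq_inv_mul]
    nlinarith [key2, hninv]
  -- R bounds
  have hR1 := abs_le.mp (hR (x + δ))
  have hR2 := abs_le.mp (hR (x - δ))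
  have hR3 := abs_le.mp (hR x)
  -- Lipschitz bounds
  have hL1 : G (x + δ) ≤ G x + W * δ := by
    have h := hW (x + δ) x
    have : |x + δ - x| = δ := by
      rw [show x + δ - x = δ by ring, abs_of_pos hδ]
    rw [this] at h
    have := abs_le.mp h
    linarith [this.1, this.2]
  have hL2 : G x ≤ G (x - δ) + W * δ := by
    have h := hW x (x - δ)
    have : |x - (x - δ)| = δ := by
      rw [show x - (x - δ) = δ by ring, abs_of_pos hδ]
    rw [this] at h
    have := abs_le.mp h
    linarith [this.1, this.2]
  have hcardnn : 0 ≤ (A.card : ℝ) / n := by positivity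
  rw [abs_sub_le_iff]
  have hdw : (0:ℝ) ≤ δ * W := mul_nonneg hδ.le hWnn
  have hgoal : 2 * (A.card : ℝ) / n = 2 * ((A.card : ℝ) / n) := by ring
  rw [hgoal]
  set c := (A.card : ℝ) / n with hc
  refine ⟨?_, ?_⟩
  · linarith [h1, hR1.2, hL1, hR3.1, hcardnn, hdw, hRnn]
  · linarith [h2, hR2.1, hL2, hR3.2, hcardnn, hdw, hRnn]
end

section
/- Suppose V_1, ..., V_{T+1} are real random variables such that V_{T+1} has continuous CDF G, the empirical CDF G̃(v) = (T+1)^{-1}∑_{t=1}^{T+1} 1{V_t < v} converges uniformly in probability to G, G is Lipschitz, and estimators V̂_t satisfy (T+1)^{-1}∑_t φ(|V̂_t − V_t|) → 0 in probability for some strictly increasing continuous φ with φ(0)=0, and V̂_{T+1} = V_{T+1} + o_P(1). Then Ĝ(V̂_{T+1}) = G(V_{T+1}) + o_P(1), where Ĝ(v) = (T+1)^{-1}∑_t 1{V̂_t < v}. -/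
open MeasureTheory Filter Finset

/-!
Write `Ĝ` and `G̃` for the empirical CDFs of the estimated and of the oracle scores. Outside the
fraction `N` of indices with `|V̂_t - V_t| ≥ δ`, each indicator `1{V̂_t < v}` is squeezed between
`1{V_t < v - δ}` and `1{V_t < v + δ}`, so `G̃(v - δ) - N ≤ Ĝ(v) ≤ G̃(v + δ) + N`. By Markov's
inequality `φ(δ) N` is at most the average of `φ(|V̂_t - V_t|)`, which is small in probability.
Uniform closeness of `G̃` to `G` and uniform continuity of `G` then give
`Ĝ(V̂_{T+1}) ≈ G(V̂_{T+1} ± δ) ≈ G(V_{T+1})` once `|V̂_{T+1} - V_{T+1}| < δ`.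
-/

noncomputable def empiricalCDF (n : ℕ) (x : ℕ → ℝ) (v : ℝ) : ℝ :=
  ((n : ℝ) + 1)⁻¹ * ∑ t ∈ range (n + 1), if x t < v then 1 else 0

noncomputable def fractionFar (n : ℕ) (x y : ℕ → ℝ) (δ : ℝ) : ℝ :=
  ((n : ℝ) + 1)⁻¹ * ∑ t ∈ range (n + 1), if δ ≤ |x t - y t| then 1 else 0

lemma fractionFar_comm (n : ℕ) (x y : ℕ → ℝ) (δ : ℝ) :
    fractionFar n x y δ = fractionFar n y x δ := by
  simp only [fractionFar, abs_sub_comm]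

lemma ite_lt_le_ite_lt_add_add_ite_le (a b u δ : ℝ) :
    (if a < u then (1 : ℝ) else 0) ≤
      (if b < u + δ then 1 else 0) + if δ ≤ |a - b| then 1 else 0 := by
  split_ifs <;> norm_num
  linarith [neg_abs_le (a - b)]

lemma empiricalCDF_le_add_fractionFar (n : ℕ) (x y : ℕ → ℝ) (u δ : ℝ) :
    empiricalCDF n x u ≤ empiricalCDF n y (u + δ) + fractionFar n x y δ := by
  rw [empiricalCDF, empiricalCDF, fractionFar, ← mul_add, ← sum_add_distrib]
  gcongr with t
  exact ite_lt_le_ite_lt_add_add_ite_le _ _ _ _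

lemma mul_fractionFar_le {φ : ℝ → ℝ} (hφ0 : φ 0 = 0) (hφ : MonotoneOn φ (Set.Ici 0))
    (n : ℕ) (x y : ℕ → ℝ) {δ : ℝ} (hδ : 0 ≤ δ) :
    φ δ * fractionFar n x y δ ≤ ((n : ℝ) + 1)⁻¹ * ∑ t ∈ range (n + 1), φ |x t - y t| := by
  rw [fractionFar, mul_left_comm, mul_sum]
  gcongr with t
  have hφ_nonneg : 0 ≤ φ |x t - y t| :=
    hφ0 ▸ hφ Set.self_mem_Ici (Set.mem_Ici.2 (abs_nonneg _)) (abs_nonneg _)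
  split_ifs with hfar
  · simpa using hφ (Set.mem_Ici.2 hδ) (Set.mem_Ici.2 (abs_nonneg _)) hfar
  · simpa using hφ_nonneg

lemma abs_empiricalCDF_sub_lt {n : ℕ} {x y : ℕ → ℝ} {G : ℝ → ℝ} {u v δ η : ℝ}
    (hy : ∀ w, |empiricalCDF n y w - G w| < η) (hG : ∀ w, |w - v| < 2 * δ → |G w - G v| ≤ η)
    (hfar : fractionFar n x y δ < η) (huv : |u - v| < δ) :
    |empiricalCDF n x u - G v| < 3 * η := by
  have hupper := empiricalCDF_le_add_fractionFar n x y u δ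
  have hlower := empiricalCDF_le_add_fractionFar n y x (u - δ) δ
  rw [sub_add_cancel, ← fractionFar_comm] at hlower
  have hy_add := abs_lt.1 (hy (u + δ))
  have hy_sub := abs_lt.1 (hy (u - δ))
  have hG_add := abs_le.1 (hG (u + δ) (by rw [abs_lt] at huv ⊢; constructor <;> linarith))
  have hG_sub := abs_le.1 (hG (u - δ) (by rw [abs_lt] at huv ⊢; constructor <;> linarith))
  rw [abs_lt]
  constructor <;> linarith

lemma tendsto_measure_of_subset_union₃ {α Ω : Type*} [MeasurableSpace Ω] (μ : Measure Ω)
    {l : Filter α} {s t₁ t₂ t₃ : α → Set Ω} (hs : ∀ i, s i ⊆ t₁ i ∪ t₂ i ∪ t₃ i)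
    (h₁ : Tendsto (fun i => μ (t₁ i)) l (nhds 0)) (h₂ : Tendsto (fun i => μ (t₂ i)) l (nhds 0))
    (h₃ : Tendsto (fun i => μ (t₃ i)) l (nhds 0)) :
    Tendsto (fun i => μ (s i)) l (nhds 0) := by
  refine tendsto_of_tendsto_of_tendsto_of_le_of_le tendsto_const_nhds
    (by simpa using (h₁.add h₂).add h₃) (fun _ => zero_le) fun i => ?_
  calc μ (s i) ≤ μ (t₁ i ∪ t₂ i ∪ t₃ i) := measure_mono (hs i)
    _ ≤ μ (t₁ i ∪ t₂ i) + μ (t₃ i) := measure_union_le _ _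
    _ ≤ μ (t₁ i) + μ (t₂ i) + μ (t₃ i) := by gcongr; exact measure_union_le _ _

theorem stmt4_general {Ω : Type*} [MeasurableSpace Ω] (μ : Measure Ω)
    (V Vhat : ℕ → ℕ → Ω → ℝ) (G : ℝ → ℝ) (φ : ℝ → ℝ) (W : ℝ)
    -- G is Lipschitz
    (hG_lip : ∀ v1 v2 : ℝ, |G v1 - G v2| ≤ W * |v1 - v2|)
    -- uniform convergence in probability of the empirical CDF of the oracle scores
    (h_emp : ∀ ε > (0:ℝ), Tendsto (fun (T : ℕ) => μ {ω | ∃ v : ℝ,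
        ε ≤ |((T:ℝ) + 1)⁻¹ * ∑ t ∈ range (T + 1), (if V T t ω < v then (1:ℝ) else 0) - G v|})
      atTop (nhds 0))
    -- φ is strictly increasing and continuous with φ(0) = 0
    (hφ0 : φ 0 = 0) (hφmono : StrictMonoOn φ (Set.Ici 0))
    -- aggregate consistency of the estimated scores
    (h_est : ∀ ε > (0:ℝ), Tendsto (fun (T : ℕ) => μ {ω |
        ε ≤ ((T:ℝ) + 1)⁻¹ * ∑ t ∈ range (T + 1), φ |Vhat T t ω - V T t ω|})
      atTop (nhds 0))
    -- consistency of the estimated test score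
    (h_last : ∀ ε > (0:ℝ), Tendsto (fun (T : ℕ) => μ {ω | ε ≤ |Vhat T T ω - V T T ω|})
      atTop (nhds 0)) :
    ∀ ε > (0:ℝ), Tendsto (fun (T : ℕ) => μ {ω |
        ε ≤ |((T:ℝ) + 1)⁻¹ * ∑ t ∈ range (T + 1),
              (if Vhat T t ω < Vhat T T ω then (1:ℝ) else 0)
            - G (V T T ω)|}) atTop (nhds 0) := by
  intro ε hε
  have hη : 0 < ε / 3 := by positivity
  have hG : UniformContinuous G := (LipschitzWith.of_dist_le' hG_lip).uniformContinuous
  obtain ⟨δ₀, hδ₀, hGδ₀⟩ := Metric.uniformContinuous_iff.1 hG (ε / 3) hη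
  have hδ : 0 < δ₀ / 2 := by positivity
  have hφδ : 0 < φ (δ₀ / 2) := hφ0 ▸ hφmono Set.self_mem_Ici (Set.mem_Ici.2 hδ.le) hδ
  refine tendsto_measure_of_subset_union₃ μ (fun T ω hω => ?_) (h_emp (ε / 3) hη)
    (h_est (φ (δ₀ / 2) * (ε / 3)) (by positivity)) (h_last (δ₀ / 2) hδ)
  by_contra hgood
  simp only [Set.mem_union, Set.mem_ofPred_eq, not_or, not_exists, not_le] at hgood hω
  obtain ⟨⟨hemp, hest⟩, hlast⟩ := hgood
  have hfar : fractionFar T (Vhat T · ω) (V T · ω) (δ₀ / 2) < ε / 3 :=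
    lt_of_mul_lt_mul_left ((mul_fractionFar_le hφ0 hφmono.monotoneOn _ _ _ hδ.le).trans_lt hest)
      hφδ.le
  have hclose := abs_empiricalCDF_sub_lt (x := (Vhat T · ω)) hemp
    (fun w hw => (hGδ₀ (by rw [Real.dist_eq]; linarith)).le)
    hfar hlast
  rw [mul_div_cancel₀ _ three_ne_zero] at hclose
  exact hω.not_gt hclose

/-- Basic consistency lemma for conformal prediction (Lemma 1): under uniform
convergence in probability of the empirical CDF of the oracle scores to a Lipschitz
(hence continuous) CDF `G`, aggregate `φ`-consistency of the estimated scores, and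
consistency of the score of the test point, the estimated empirical CDF evaluated at
the estimated test score converges in probability to `G(V_{T+1})`.
Here, for sample size index `T`, observations are `t ∈ {0, …, T}` with `t = T`
playing the role of the test point `T+1`. -/
theorem stmt4 {Ω : Type*} [MeasurableSpace Ω] (μ : Measure Ω) [IsProbabilityMeasure μ]
    (V Vhat : ℕ → ℕ → Ω → ℝ) (G : ℝ → ℝ) (φ : ℝ → ℝ) (W : ℝ)
    -- G is the CDF of the oracle score of the test point
    (hG_cdf : ∀ T v, G v = (μ {ω | V T T ω ≤ v}).toReal)
    -- G is Lipschitz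
    (hG_lip : ∀ v1 v2 : ℝ, |G v1 - G v2| ≤ W * |v1 - v2|)
    -- uniform convergence in probability of the empirical CDF of the oracle scores
    (h_emp : ∀ ε > (0:ℝ), Tendsto (fun (T : ℕ) => μ {ω | ∃ v : ℝ,
        ε ≤ |((T:ℝ) + 1)⁻¹ * ∑ t ∈ range (T + 1), (if V T t ω < v then (1:ℝ) else 0) - G v|})
      atTop (nhds 0))
    -- φ is strictly increasing and continuous with φ(0) = 0
    (hφ0 : φ 0 = 0) (hφmono : StrictMonoOn φ (Set.Ici 0)) (hφcont : Continuous φ)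
    -- aggregate consistency of the estimated scores
    (h_est : ∀ ε > (0:ℝ), Tendsto (fun (T : ℕ) => μ {ω |
        ε ≤ ((T:ℝ) + 1)⁻¹ * ∑ t ∈ range (T + 1), φ |Vhat T t ω - V T t ω|})
      atTop (nhds 0))
    -- consistency of the estimated test score
    (h_last : ∀ ε > (0:ℝ), Tendsto (fun (T : ℕ) => μ {ω | ε ≤ |Vhat T T ω - V T T ω|})
      atTop (nhds 0)) :
    ∀ ε > (0:ℝ), Tendsto (fun (T : ℕ) => μ {ω |
        ε ≤ |((T:ℝ) + 1)⁻¹ * ∑ t ∈ range (T + 1),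
              (if Vhat T t ω < Vhat T T ω then (1:ℝ) else 0)
            - G (V T T ω)|}) atTop (nhds 0) :=
  stmt4_general μ V Vhat G φ W hG_lip h_emp hφ0 hφmono h_est h_last
end

section
/- Under the assumptions of the basic consistency lemma (uniform convergence of the empirical CDF of the oracle scores to a continuous Lipschitz CDF G, and consistency of the estimated scores in aggregate φ-norm), the conformal prediction set Ĉ = {y : p̂(y) > α} with p̂(y) = (T+1)^{-1}∑_{t=1}^{T+1} 1{V̂_t^{(y)} ≥ V̂_{T+1}^{(y)}} satisfies P(Y_{T+1} ∈ Ĉ(X_{T+1})) = 1 − α + o(1). -/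
open MeasureTheory Filter Finset

noncomputable def conformalPValue (n : ℕ) (x : ℕ → ℝ) : ℝ :=
  ((n : ℝ) + 1)⁻¹ * ∑ t ∈ range (n + 1), if x n ≤ x t then 1 else 0

section Empirical

variable (n : ℕ) (x : ℕ → ℝ)

theorem exists_empiricalCDF_eq_zero : ∃ v, empiricalCDF n x v = 0 := by
  refine ⟨(range (n + 1)).inf' nonempty_range_add_one x, ?_⟩
  rw [empiricalCDF, sum_eq_zero fun t ht => if_neg (not_lt.2 (inf'_le x ht)), mul_zero]

theorem exists_empiricalCDF_eq_one : ∃ v, empiricalCDF n x v = 1 := by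
  refine ⟨(range (n + 1)).sup' nonempty_range_add_one x + 1, ?_⟩
  rw [empiricalCDF, sum_congr rfl fun t ht => if_pos ((le_sup' x ht).trans_lt (lt_add_one _)),
    sum_const, card_range, nsmul_one, Nat.cast_add_one, inv_mul_cancel₀ (by positivity)]

theorem conformalPValue_eq_one_sub_empiricalCDF :
    conformalPValue n x = 1 - empiricalCDF n x (x n) := by
  have hsplit : ∀ t, (if x n ≤ x t then (1 : ℝ) else 0) = 1 - if x t < x n then 1 else 0 := by
    intro t
    by_cases h : x t < x n
    · simp [h, not_le.2 h]
    · simp [h, not_lt.1 h]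
  rw [conformalPValue, empiricalCDF, sum_congr rfl fun t _ => hsplit t, sum_sub_distrib,
    sum_const, card_range, nsmul_one, Nat.cast_add_one, mul_sub, inv_mul_cancel₀ (by positivity)]

theorem empiricalCDF_le_add (a b : ℕ → ℝ) (c δ : ℝ) :
    empiricalCDF n b c ≤ empiricalCDF n a (c + δ)
      + ((n : ℝ) + 1)⁻¹ * #{t ∈ range (n + 1) | δ ≤ |b t - a t|} := by
  rw [empiricalCDF, empiricalCDF, ← sum_boole, ← mul_add, ← sum_add_distrib]
  refine mul_le_mul_of_nonneg_left (sum_le_sum fun t _ => ?_) (by positivity)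
  by_cases hbad : δ ≤ |b t - a t|
  · simp only [hbad, if_true]
    split_ifs <;> norm_num
  · have hclose := abs_lt.1 (not_le.1 hbad)
    by_cases hb : b t < c
    · simp only [hb, show a t < c + δ by linarith, hbad, if_true]
      norm_num
    · simp only [hb, if_false]
      split_ifs <;> norm_num

end Empirical

theorem card_filter_mul_le_sum {ι : Type*} (s : Finset ι) (d : ι → ℝ) (hd : ∀ i, 0 ≤ d i)
    {φ : ℝ → ℝ} (hφ : MonotoneOn φ (Set.Ici 0)) (hφ0 : 0 ≤ φ 0) {δ : ℝ} (hδ : 0 ≤ δ) :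
    #{i ∈ s | δ ≤ d i} * φ δ ≤ ∑ i ∈ s, φ (d i) := by
  have hφ_nonneg : ∀ i, 0 ≤ φ (d i) := fun i => hφ0.trans (hφ Set.self_mem_Ici (hd i) (hd i))
  calc #{i ∈ s | δ ≤ d i} * φ δ ≤ ∑ i ∈ s with δ ≤ d i, φ (d i) := by
        rw [← nsmul_eq_mul]
        exact card_nsmul_le_sum _ _ _ fun i hi => hφ hδ (hd i) (mem_filter.1 hi).2
    _ ≤ ∑ i ∈ s, φ (d i) :=
        sum_le_sum_of_subset_of_nonneg (filter_subset _ _) fun i _ _ => hφ_nonneg i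

theorem proportion_lt_of_mean_lt (n : ℕ) (a b : ℕ → ℝ) {φ : ℝ → ℝ}
    (hφ0 : φ 0 = 0) (hφ : StrictMonoOn φ (Set.Ici 0)) {ε δ : ℝ} (hδ : 0 < δ)
    (hmean : ((n : ℝ) + 1)⁻¹ * ∑ t ∈ range (n + 1), φ |b t - a t| < ε * φ δ) :
    ((n : ℝ) + 1)⁻¹ * #{t ∈ range (n + 1) | δ ≤ |b t - a t|} < ε := by
  have hφδ : 0 < φ δ := hφ0 ▸ hφ Set.self_mem_Ici hδ.le hδ
  have hmarkov := card_filter_mul_le_sum (range (n + 1)) (fun t => |b t - a t|)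
    (fun t => abs_nonneg _) hφ.monotoneOn hφ0.ge hδ.le
  refine lt_of_mul_lt_mul_right ?_ hφδ.le
  calc ((n : ℝ) + 1)⁻¹ * #{t ∈ range (n + 1) | δ ≤ |b t - a t|} * φ δ
      ≤ ((n : ℝ) + 1)⁻¹ * ∑ t ∈ range (n + 1), φ |b t - a t| := by
        rw [mul_assoc]
        exact mul_le_mul_of_nonneg_left hmarkov (by positivity)
    _ < ε * φ δ := hmean

theorem abs_conformalPValue_sub_le (n : ℕ) (a b : ℕ → ℝ) {G : ℝ → ℝ} {W ε δ : ℝ}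
    (hG_lip : ∀ v₁ v₂, |G v₁ - G v₂| ≤ W * |v₁ - v₂|)
    (happrox : ∀ v, |empiricalCDF n a v - G v| < ε)
    (hprop : ((n : ℝ) + 1)⁻¹ * #{t ∈ range (n + 1) | δ ≤ |b t - a t|} < ε)
    (hlast : |b n - a n| < δ) :
    |conformalPValue n b - (1 - G (a n))| ≤ 2 * (ε + W * δ) := by
  have hW : 0 ≤ W := by simpa using (abs_nonneg _).trans (hG_lip 1 0)
  have hlast' := abs_lt.1 hlast
  have hG_shift : ∀ v, |v - a n| ≤ 2 * δ → |G v - G (a n)| ≤ W * (2 * δ) := fun v hv =>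
    (hG_lip _ _).trans (mul_le_mul_of_nonneg_left hv hW)
  have hG_up := abs_le.1 (hG_shift (b n + δ) (abs_le.2 ⟨by linarith, by linarith⟩))
  have hG_down := abs_le.1 (hG_shift (b n - δ) (abs_le.2 ⟨by linarith, by linarith⟩))
  have happrox_up := abs_lt.1 (happrox (b n + δ))
  have happrox_down := abs_lt.1 (happrox (b n - δ))
  have hupper := empiricalCDF_le_add n a b (b n) δ
  have hlower := empiricalCDF_le_add n b a (b n - δ) δ
  simp only [abs_sub_comm (a _), sub_add_cancel] at hlower
  rw [conformalPValue_eq_one_sub_empiricalCDF, abs_le]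
  constructor <;> linarith

theorem Ioo_subset_range_of_empiricalCDF_approx {G : ℝ → ℝ} (hG : Continuous G)
    (happrox : ∀ ε > 0, ∃ (n : ℕ) (x : ℕ → ℝ), ∀ v, |empiricalCDF n x v - G v| < ε) :
    Set.Ioo 0 1 ⊆ Set.range G := by
  rintro u ⟨hu₀, hu₁⟩
  obtain ⟨n, x, hx⟩ := happrox (min u (1 - u)) (lt_min hu₀ (sub_pos.2 hu₁))
  obtain ⟨v₀, hv₀⟩ := exists_empiricalCDF_eq_zero n x
  obtain ⟨v₁, hv₁⟩ := exists_empiricalCDF_eq_one n x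
  have hG₀ : G v₀ ≤ u := by
    have := (abs_lt.1 (hx v₀)).1
    rw [hv₀] at this
    linarith [min_le_left u (1 - u)]
  have hG₁ : u ≤ G v₁ := by
    have := (abs_lt.1 (hx v₁)).2
    rw [hv₁] at this
    linarith [min_le_right u (1 - u)]
  exact intermediate_value_univ v₀ v₁ hG ⟨hG₀, hG₁⟩

section Probability

variable {Ω : Type*} [MeasurableSpace Ω] (μ : Measure Ω)

theorem exists_forall_abs_empiricalCDF_sub_lt [IsProbabilityMeasure μ]
    (V : ℕ → ℕ → Ω → ℝ) (G : ℝ → ℝ)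
    (h_emp : ∀ ε > (0 : ℝ), Tendsto (fun T => μ {ω | ∃ v : ℝ,
      ε ≤ |empiricalCDF T (fun t => V T t ω) v - G v|}) atTop (nhds 0)) :
    ∀ ε > 0, ∃ (n : ℕ) (x : ℕ → ℝ), ∀ v, |empiricalCDF n x v - G v| < ε := by
  intro ε hε
  obtain ⟨T, hT⟩ := ((h_emp ε hε).eventually_lt_const zero_lt_one).exists
  obtain ⟨ω, hω⟩ : ∃ ω, ω ∉ {ω | ∃ v : ℝ, ε ≤ |empiricalCDF T (fun t => V T t ω) v - G v|} :=
    Set.ne_univ_iff_exists_notMem _ |>.1 fun h => by simp [h] at hT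
  exact ⟨T, _, fun v => not_le.1 fun h => hω ⟨v, h⟩⟩

theorem measureReal_cdf_comp_lt [IsFiniteMeasure μ] {V : Ω → ℝ} {G : ℝ → ℝ}
    (hG : ∀ v, G v = μ.real {ω | V ω ≤ v}) (hrange : Set.Ioo 0 1 ⊆ Set.range G) {u : ℝ}
    (hu : u ∈ Set.Ioo 0 1) : μ.real {ω | G (V ω) < u} = u := by
  have hmono : Monotone G := fun x y hxy => by
    rw [hG, hG]
    exact measureReal_mono fun ω (hω : V ω ≤ x) => hω.trans hxy
  obtain ⟨s, rfl⟩ := hrange hu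
  refine le_antisymm ?_ (le_of_forall_lt_imp_le_of_dense fun a ha => ?_)
  · refine (measureReal_mono fun ω (hω : G (V ω) < G s) => ?_).trans (hG s).ge
    exact not_lt.1 fun h => hω.not_ge (hmono h.le)
  · rcases le_or_gt a 0 with ha₀ | ha₀
    · exact ha₀.trans measureReal_nonneg
    obtain ⟨s', rfl⟩ := hrange ⟨ha₀, ha.trans hu.2⟩
    exact (hG s').le.trans (measureReal_mono fun ω (hω : V ω ≤ s') => (hmono hω).trans_lt ha)

theorem tendsto_measureReal_lt_of_tendsto_measure_abs_sub [IsFiniteMeasure μ] {ι : Type*}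
    {l : Filter ι} {X Y : ι → Ω → ℝ} {F : ℝ → ℝ} {a : ℝ}
    (hXY : ∀ η > 0, Tendsto (fun i => μ {ω | η ≤ |X i ω - Y i ω|}) l (nhds 0))
    (hY : ∀ᶠ c in nhds a, ∀ i, μ.real {ω | c < Y i ω} = F c) (hF : ContinuousAt F a) :
    Tendsto (fun i => μ.real {ω | a < X i ω}) l (nhds (F a)) := by
  have hXY_real : ∀ η > 0, Tendsto (fun i => μ.real {ω | η ≤ |X i ω - Y i ω|}) l (nhds 0) :=
    fun η hη => by
      have := (ENNReal.tendsto_toReal ENNReal.zero_ne_top).comp (hXY η hη)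
      rwa [ENNReal.toReal_zero] at this
  refine tendsto_order.2 ⟨fun b hb => ?_, fun b hb => ?_⟩
  · obtain ⟨c, hac, hbc, hc⟩ := ((hF.eventually (lt_mem_nhds hb)).and hY).exists_gt
    filter_upwards [(hXY_real (c - a) (sub_pos.2 hac)).eventually_lt_const (sub_pos.2 hbc)]
      with i hi
    have hsub : {ω | c < Y i ω} ⊆ {ω | a < X i ω} ∪ {ω | c - a ≤ |X i ω - Y i ω|} := by
      intro ω (hω : c < Y i ω)
      by_cases hXa : a < X i ω
      · exact Or.inl hXa
      · refine Or.inr (show c - a ≤ |X i ω - Y i ω| from le_abs'.2 (Or.inl ?_))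
        linarith [not_lt.1 hXa]
    linarith [hc i, (measureReal_mono (μ := μ) hsub).trans (measureReal_union_le _ _)]
  · obtain ⟨c, hca, hbc, hc⟩ := ((hF.eventually (gt_mem_nhds hb)).and hY).exists_lt
    filter_upwards [(hXY_real (a - c) (sub_pos.2 hca)).eventually_lt_const (sub_pos.2 hbc)]
      with i hi
    have hsub : {ω | a < X i ω} ⊆ {ω | c < Y i ω} ∪ {ω | a - c ≤ |X i ω - Y i ω|} := by
      intro ω (hω : a < X i ω)
      by_cases hYc : c < Y i ω
      · exact Or.inl hYc
      · refine Or.inr (show a - c ≤ |X i ω - Y i ω| from le_abs'.2 (Or.inr ?_))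
        linarith [not_lt.1 hYc]
    linarith [hc i, (measureReal_mono (μ := μ) hsub).trans (measureReal_union_le _ _)]

theorem tendsto_measure_abs_conformalPValue_sub (V Vhat : ℕ → ℕ → Ω → ℝ) {G φ : ℝ → ℝ} {W : ℝ}
    (hG_lip : ∀ v₁ v₂, |G v₁ - G v₂| ≤ W * |v₁ - v₂|)
    (h_emp : ∀ ε > (0 : ℝ), Tendsto (fun T => μ {ω | ∃ v : ℝ,
      ε ≤ |empiricalCDF T (fun t => V T t ω) v - G v|}) atTop (nhds 0))
    (hφ0 : φ 0 = 0) (hφ : StrictMonoOn φ (Set.Ici 0))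
    (h_est : ∀ ε > (0 : ℝ), Tendsto (fun (T : ℕ) => μ {ω |
      ε ≤ ((T : ℝ) + 1)⁻¹ * ∑ t ∈ range (T + 1), φ |Vhat T t ω - V T t ω|}) atTop (nhds 0))
    (h_last : ∀ ε > (0 : ℝ), Tendsto (fun T => μ {ω | ε ≤ |Vhat T T ω - V T T ω|})
      atTop (nhds 0)) :
    ∀ η > 0, Tendsto (fun T => μ {ω |
      η ≤ |conformalPValue T (fun t => Vhat T t ω) - (1 - G (V T T ω))|}) atTop (nhds 0) := by
  intro η hη
  obtain ⟨δ, hδ, hWδ⟩ := exists_pos_mul_lt (show 0 < η / 4 by positivity) W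
  have hφδ : 0 < φ δ := hφ0 ▸ hφ Set.self_mem_Ici hδ.le hδ
  have hsub : ∀ T, {ω | η ≤ |conformalPValue T (fun t => Vhat T t ω) - (1 - G (V T T ω))|} ⊆
      {ω | ∃ v : ℝ, η / 4 ≤ |empiricalCDF T (fun t => V T t ω) v - G v|}
      ∪ {ω | η / 4 * φ δ ≤ ((T : ℝ) + 1)⁻¹ * ∑ t ∈ range (T + 1), φ |Vhat T t ω - V T t ω|}
      ∪ {ω | δ ≤ |Vhat T T ω - V T T ω|} := by
    intro T ω hω
    by_contra hgood
    simp only [Set.mem_union, Set.mem_ofPred_eq, not_or, not_exists, not_le] at hgood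
    obtain ⟨⟨happrox, hmean⟩, hlast⟩ := hgood
    have := abs_conformalPValue_sub_le T (fun t => V T t ω) (fun t => Vhat T t ω) hG_lip happrox
      (proportion_lt_of_mean_lt T _ _ hφ0 hφ hδ hmean) hlast
    exact (show η ≤ _ from hω).not_gt (by linarith)
  have hbound := ((h_emp (η / 4) (by positivity)).add (h_est (η / 4 * φ δ) (by positivity))).add
    (h_last δ hδ)
  rw [add_zero, add_zero] at hbound
  refine tendsto_of_tendsto_of_tendsto_of_le_of_le tendsto_const_nhds hbound (fun _ => zero_le)
    fun T => (measure_mono (hsub T)).trans ?_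
  exact (measure_union_le _ _).trans (add_le_add_left (measure_union_le _ _) _)

end Probability

theorem stmt5_general {Ω : Type*} [MeasurableSpace Ω] (μ : Measure Ω) [IsProbabilityMeasure μ]
    (S : ℕ → ℕ → ℝ → Ω → ℝ) (Ylast : ℕ → Ω → ℝ)
    (V Vhat : ℕ → ℕ → Ω → ℝ) (G : ℝ → ℝ) (φ : ℝ → ℝ) (W α : ℝ)
    (hα : α ∈ Set.Ioo (0:ℝ) 1)
    -- the estimated scores entering the assumptions are those at the true test value
    (hVhat : ∀ T t ω, Vhat T t ω = S T t (Ylast T ω) ω)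
    -- G is the CDF of the oracle score of the test point
    (hG_cdf : ∀ T v, G v = (μ {ω | V T T ω ≤ v}).toReal)
    -- G is Lipschitz
    (hG_lip : ∀ v1 v2 : ℝ, |G v1 - G v2| ≤ W * |v1 - v2|)
    -- uniform convergence in probability of the empirical CDF of the oracle scores
    (h_emp : ∀ ε > (0:ℝ), Tendsto (fun (T : ℕ) => μ {ω | ∃ v : ℝ,
        ε ≤ |((T:ℝ) + 1)⁻¹ * ∑ t ∈ range (T + 1), (if V T t ω < v then (1:ℝ) else 0) - G v|})
      atTop (nhds 0))
    -- φ is strictly increasing and continuous with φ(0) = 0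
    (hφ0 : φ 0 = 0) (hφmono : StrictMonoOn φ (Set.Ici 0))
    -- aggregate consistency of the estimated scores
    (h_est : ∀ ε > (0:ℝ), Tendsto (fun (T : ℕ) => μ {ω |
        ε ≤ ((T:ℝ) + 1)⁻¹ * ∑ t ∈ range (T + 1), φ |Vhat T t ω - V T t ω|})
      atTop (nhds 0))
    -- consistency of the estimated test score
    (h_last : ∀ ε > (0:ℝ), Tendsto (fun (T : ℕ) => μ {ω | ε ≤ |Vhat T T ω - V T T ω|})
      atTop (nhds 0)) :
    -- coverage: P(Y_{T+1} ∈ Ĉ(X_{T+1})) = P(p̂(Y_{T+1}) > α) → 1 − α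
    Tendsto (fun (T : ℕ) => (μ {ω | α < ((T:ℝ) + 1)⁻¹ * ∑ t ∈ range (T + 1),
        (if S T T (Ylast T ω) ω ≤ S T t (Ylast T ω) ω then (1:ℝ) else 0)}).toReal)
      atTop (nhds (1 - α)) := by
  simp only [← hVhat]
  have hG_cont : Continuous G :=
    (LipschitzWith.of_dist_le' fun x y => by simpa only [Real.dist_eq] using hG_lip x y).continuous
  have hrange : Set.Ioo 0 1 ⊆ Set.range G := Ioo_subset_range_of_empiricalCDF_approx hG_cont
    (exists_forall_abs_empiricalCDF_sub_lt μ V G h_emp)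
  have hpit : ∀ᶠ c in nhds α, ∀ T, μ.real {ω | c < 1 - G (V T T ω)} = 1 - c := by
    filter_upwards [Ioo_mem_nhds hα.1 hα.2] with c hc T
    simp only [lt_sub_comm (a := c)]
    exact measureReal_cdf_comp_lt μ (hG_cdf T) hrange ⟨by linarith [hc.2], by linarith [hc.1]⟩
  exact tendsto_measureReal_lt_of_tendsto_measure_abs_sub μ
    (tendsto_measure_abs_conformalPValue_sub μ V Vhat hG_lip h_emp hφ0 hφmono h_est h_last)
    hpit (continuousAt_const.sub continuousAt_id)

/-- Asymptotic unconditional validity of full distributional conformal prediction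
(Theorem 2): under the assumptions of the basic consistency lemma, the coverage
probability of the conformal prediction set `Ĉ = {y : p̂(y) > α}` converges to `1 − α`.
Here `S T t y ω` is the estimated conformity score `V̂_t^{(y)}` of observation `t`
computed from the augmented data with trial value `y`, `Ylast T` is the test outcome
`Y_{T+1}`, and the event below is exactly `{Y_{T+1} ∈ Ĉ(X_{T+1})}`. For sample size
index `T`, observations are `t ∈ {0, …, T}` with `t = T` the test point. -/
theorem stmt5 {Ω : Type*} [MeasurableSpace Ω] (μ : Measure Ω) [IsProbabilityMeasure μ]
    (S : ℕ → ℕ → ℝ → Ω → ℝ) (Ylast : ℕ → Ω → ℝ)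
    (V Vhat : ℕ → ℕ → Ω → ℝ) (G : ℝ → ℝ) (φ : ℝ → ℝ) (W α : ℝ)
    (hα : α ∈ Set.Ioo (0:ℝ) 1)
    -- the estimated scores entering the assumptions are those at the true test value
    (hVhat : ∀ T t ω, Vhat T t ω = S T t (Ylast T ω) ω)
    -- G is the CDF of the oracle score of the test point
    (hG_cdf : ∀ T v, G v = (μ {ω | V T T ω ≤ v}).toReal)
    -- G is Lipschitz
    (hG_lip : ∀ v1 v2 : ℝ, |G v1 - G v2| ≤ W * |v1 - v2|)
    -- uniform convergence in probability of the empirical CDF of the oracle scores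
    (h_emp : ∀ ε > (0:ℝ), Tendsto (fun (T : ℕ) => μ {ω | ∃ v : ℝ,
        ε ≤ |((T:ℝ) + 1)⁻¹ * ∑ t ∈ range (T + 1), (if V T t ω < v then (1:ℝ) else 0) - G v|})
      atTop (nhds 0))
    -- φ is strictly increasing and continuous with φ(0) = 0
    (hφ0 : φ 0 = 0) (hφmono : StrictMonoOn φ (Set.Ici 0)) (hφcont : Continuous φ)
    -- aggregate consistency of the estimated scores
    (h_est : ∀ ε > (0:ℝ), Tendsto (fun (T : ℕ) => μ {ω |
        ε ≤ ((T:ℝ) + 1)⁻¹ * ∑ t ∈ range (T + 1), φ |Vhat T t ω - V T t ω|})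
      atTop (nhds 0))
    -- consistency of the estimated test score
    (h_last : ∀ ε > (0:ℝ), Tendsto (fun (T : ℕ) => μ {ω | ε ≤ |Vhat T T ω - V T T ω|})
      atTop (nhds 0)) :
    -- coverage: P(Y_{T+1} ∈ Ĉ(X_{T+1})) = P(p̂(Y_{T+1}) > α) → 1 − α
    Tendsto (fun (T : ℕ) => (μ {ω | α < ((T:ℝ) + 1)⁻¹ * ∑ t ∈ range (T + 1),
        (if S T T (Ylast T ω) ω ≤ S T t (Ylast T ω) ω then (1:ℝ) else 0)}).toReal)
      atTop (nhds (1 - α)) :=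
  stmt5_general μ S Ylast V Vhat G φ W α hα hVhat hG_cdf hG_lip h_emp hφ0 hφmono h_est h_last
end

section
/- Suppose Y given X = x has CDF F(·,x) with density f(y,x) ≥ C_2 > 0 on its support, the smallest eigenvalue of E[X Xᵀ] is at least C_3 > 0, and γ*(u) minimizes γ ↦ E ρ_u(Y − Xᵀγ) over Γ with E[(F(Xᵀγ*(u), X) − u)X] = 0. Then for any γ ∈ Γ, E[ρ_u(Y − Xᵀγ)] − E[ρ_u(Y − Xᵀγ*(u))] ≥ (C_2 C_3 / 2) ‖γ − γ*(u)‖_2^2. -/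
open MeasureTheory ProbabilityTheory Set
open scoped RealInnerProductSpace

/-- The quantile-regression check function `ρ_u(a) = a (u − 1{a ≤ 0})`. -/
noncomputable def checkFn (u a : ℝ) : ℝ := a * (u - if a ≤ 0 then 1 else 0)

/-!
Conditionally on `X`, Knight's identity expresses the check-loss gap between the indices
`a = Xᵀγ*` and `c = Xᵀγ` as `∫_a^c (F(s, X) − u) ds`. The density bound gives `F(·, X)` slope at
least `C2` on the support, so this integral is at least `(F(a, X) − u)(c − a) + C2 (c − a)² / 2`.
In expectation the linear term vanishes by the first-order condition, and the quadratic term is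
at least `C2 C3 ‖γ − γ*‖² / 2` by the eigenvalue bound.
-/

open scoped ENNReal

theorem checkFn_eq_mul_add_max (u a : ℝ) : checkFn u a = u * a + max (-a) 0 := by
  unfold checkFn
  split_ifs with h
  · rw [max_eq_left (by linarith)]; ring
  · rw [max_eq_right (by linarith)]; ring

theorem continuous_checkFn (u : ℝ) : Continuous (checkFn u) := by
  rw [funext (checkFn_eq_mul_add_max u)]
  fun_prop

theorem lintegral_ofReal_max_sub_sub_max_sub (ν : Measure ℝ) [IsProbabilityMeasure ν] {a c : ℝ}
    (hac : a ≤ c) :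
    ∫⁻ y, ENNReal.ofReal (max (c - y) 0 - max (a - y) 0) ∂ν
      = ∫⁻ s in Ico a c, ENNReal.ofReal (cdf ν s) := by
  -- `(c - y)⁺ - (a - y)⁺` is the length of `[a, c) ∩ [y, ∞)`; integrate in `y` and swap (Tonelli).
  have hlength : ∀ y, ENNReal.ofReal (max (c - y) 0 - max (a - y) 0)
      = ∫⁻ s in Ico a c, (Iic s).indicator 1 y := by
    intro y
    have hind : (fun s => (Iic s).indicator (1 : ℝ → ℝ≥0∞) y) = (Ici y).indicator 1 := by
      ext s; simp [indicator_apply]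
    have hinter : Ici y ∩ Ico a c = Ico (max a y) c := by
      ext s; simp only [mem_inter_iff, mem_Ici, mem_Ico, max_le_iff]; tauto
    rw [hind, lintegral_indicator_one measurableSet_Ici, Measure.restrict_apply measurableSet_Ici,
      hinter, Real.volume_Ico]
    rcases le_total y a with hya | hay
    · rw [max_eq_left hya, max_eq_left (by linarith), max_eq_left (by linarith)]
      ring_nf
    · rw [max_eq_right hay, max_eq_right (by linarith : a - y ≤ 0), sub_zero]
      rcases le_total y c with hyc | hcy
      · rw [max_eq_left (by linarith)]
      · rw [max_eq_right (by linarith), ENNReal.ofReal_zero,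
          ENNReal.ofReal_of_nonpos (by linarith)]
  have hmeas : Measurable (Function.uncurry fun y s : ℝ => (Iic s).indicator (1 : ℝ → ℝ≥0∞) y) := by
    have : (Function.uncurry fun y s : ℝ => (Iic s).indicator (1 : ℝ → ℝ≥0∞) y)
        = {p : ℝ × ℝ | p.1 ≤ p.2}.indicator 1 := by
      ext p; simp [indicator_apply, Function.uncurry]
    rw [this]
    exact measurable_one.indicator (measurableSet_le measurable_fst measurable_snd)
  simp_rw [hlength]
  rw [lintegral_lintegral_swap hmeas.aemeasurable]
  congr with s
  rw [lintegral_indicator_one measurableSet_Iic, ofReal_cdf]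

theorem integral_max_sub_sub_max_sub_of_le (ν : Measure ℝ) [IsProbabilityMeasure ν] {a c : ℝ}
    (hac : a ≤ c) :
    ∫ y, (max (c - y) 0 - max (a - y) 0) ∂ν = ∫ s in a..c, cdf ν s := by
  have hnonneg : ∀ y, 0 ≤ max (c - y) 0 - max (a - y) 0 := fun y =>
    sub_nonneg.2 (max_le_max (by linarith) le_rfl)
  rw [intervalIntegral.integral_of_le hac, ← integral_Ico_eq_integral_Ioc,
    integral_eq_lintegral_of_nonneg_ae (.of_forall hnonneg)
      (by fun_prop : Continuous fun y : ℝ => max (c - y) 0 - max (a - y) 0).aestronglyMeasurable,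
    integral_eq_lintegral_of_nonneg_ae (.of_forall (cdf_nonneg ν))
      (monotone_cdf ν).measurable.aestronglyMeasurable,
    lintegral_ofReal_max_sub_sub_max_sub ν hac]

theorem integral_max_sub_sub_max_sub (ν : Measure ℝ) [IsProbabilityMeasure ν] (a c : ℝ) :
    ∫ y, (max (c - y) 0 - max (a - y) 0) ∂ν = ∫ s in a..c, cdf ν s := by
  rcases le_total a c with hac | hca
  · exact integral_max_sub_sub_max_sub_of_le ν hac
  · rw [intervalIntegral.integral_symm, ← integral_max_sub_sub_max_sub_of_le ν hca, ← integral_neg]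
    congr with y
    ring

theorem integral_checkFn_sub_checkFn (ν : Measure ℝ) [IsProbabilityMeasure ν] (u a c : ℝ) :
    ∫ y, (checkFn u (y - c) - checkFn u (y - a)) ∂ν = ∫ s in a..c, (cdf ν s - u) := by
  have hhinge : Integrable (fun y => max (c - y) 0 - max (a - y) 0) ν := by
    have hcont : Continuous fun y : ℝ => max (c - y) 0 - max (a - y) 0 := by fun_prop
    refine .of_bound hcont.aestronglyMeasurable |c - a| (.of_forall fun y => ?_)
    simpa using abs_max_sub_max_le_abs (c - y) (a - y) 0
  have hsplit : ∀ y, checkFn u (y - c) - checkFn u (y - a)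
      = (max (c - y) 0 - max (a - y) 0) - u * (c - a) := by
    intro y
    simp only [checkFn_eq_mul_add_max, neg_sub]
    ring
  simp_rw [hsplit]
  rw [integral_sub hhinge (integrable_const _), integral_const, integral_max_sub_sub_max_sub,
    intervalIntegral.integral_sub (monotone_cdf ν).intervalIntegrable intervalIntegrable_const,
    intervalIntegral.integral_const]
  simp only [probReal_univ, smul_eq_mul]
  ring

theorem le_intervalIntegral_of_slope_ge {G : ℝ → ℝ} {C a c : ℝ}
    (hG : IntervalIntegrable G volume a c)
    (hslope : ∀ y₁ ∈ uIcc a c, ∀ y₂ ∈ uIcc a c, y₁ ≤ y₂ → C * (y₂ - y₁) ≤ G y₂ - G y₁) :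
    (c - a) * G a + C / 2 * (c - a) ^ 2 ≤ ∫ s in a..c, G s := by
  have hline : ∫ s in a..c, (G a + C * (s - a)) = (c - a) * G a + C / 2 * (c - a) ^ 2 := by
    rw [intervalIntegral.integral_add intervalIntegrable_const
        ((by fun_prop : Continuous fun s => C * (s - a)).intervalIntegrable a c),
      intervalIntegral.integral_const, intervalIntegral.integral_const_mul,
      intervalIntegral.integral_comp_sub_right (fun s => s), integral_id, smul_eq_mul]
    ring
  have hline_int : IntervalIntegrable (fun s => G a + C * (s - a)) volume a c :=
    (by fun_prop : Continuous fun s => G a + C * (s - a)).intervalIntegrable a c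
  rw [← hline]
  rcases le_total a c with hac | hca
  · refine intervalIntegral.integral_mono_on hac hline_int hG fun s hs => ?_
    have := hslope a left_mem_uIcc s (Icc_subset_uIcc hs) hs.1
    linarith
  · rw [intervalIntegral.integral_symm c a, intervalIntegral.integral_symm c a, neg_le_neg_iff]
    refine intervalIntegral.integral_mono_on hca hG.symm hline_int.symm fun s hs => ?_
    have := hslope s (Icc_subset_uIcc' hs) a left_mem_uIcc hs.2
    linarith

theorem measurable_cdf_apply {β : Type*} [MeasurableSpace β] (κ : Kernel β ℝ) [IsMarkovKernel κ]
    {a : β → ℝ} (ha : Measurable a) : Measurable fun x => cdf (κ x) (a x) := by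
  simp_rw [cdf_eq_real, measureReal_def]
  exact (Kernel.measurable_kernel_prodMk_left
    (measurableSet_le measurable_snd (ha.comp measurable_fst))).ennreal_toReal

theorem abs_cdf_sub_le (ν : Measure ℝ) (x u : ℝ) : |cdf ν x - u| ≤ 1 + |u| :=
  (abs_sub _ _).trans (by rw [abs_of_nonneg (cdf_nonneg ν x)]; linarith [cdf_le_one ν x])

section Conditioning

variable {Ω β : Type*} [MeasurableSpace Ω] [MeasurableSpace β] {μ : Measure Ω} [IsFiniteMeasure μ]
  {X : Ω → β} {Y : Ω → ℝ}

theorem integral_comp_eq_integral_condDistrib {f : β × ℝ → ℝ} (hX : Measurable X)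
    (hY : AEMeasurable Y μ) (hf : StronglyMeasurable f)
    (hfi : Integrable (fun ω => f (X ω, Y ω)) μ) :
    ∫ ω, f (X ω, Y ω) ∂μ = ∫ ω, ∫ y, f (X ω, y) ∂condDistrib Y X μ (X ω) ∂μ := by
  rw [← integral_condExp hX.comap_le]
  exact integral_congr_ae (condExp_prod_ae_eq_integral_condDistrib hX hY hf hfi)

theorem integrable_integral_condDistrib {f : β × ℝ → ℝ} (hX : Measurable X)
    (hY : AEMeasurable Y μ) (hf : StronglyMeasurable f)
    (hfi : Integrable (fun ω => f (X ω, Y ω)) μ) :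
    Integrable (fun ω => ∫ y, f (X ω, y) ∂condDistrib Y X μ (X ω)) μ :=
  integrable_condExp.congr (condExp_prod_ae_eq_integral_condDistrib hX hY hf hfi)

variable {a c : β → ℝ} (u : ℝ)

theorem stronglyMeasurable_checkFn_sub_checkFn (ha : Measurable a) (hc : Measurable c) :
    StronglyMeasurable fun p : β × ℝ => checkFn u (p.2 - c p.1) - checkFn u (p.2 - a p.1) :=
  ((continuous_checkFn u).measurable.comp (measurable_snd.sub (hc.comp measurable_fst))).sub
    ((continuous_checkFn u).measurable.comp (measurable_snd.sub (ha.comp measurable_fst)))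
    |>.stronglyMeasurable

theorem integral_checkFn_sub_checkFn_eq_integral_cdf (hX : Measurable X) (hY : AEMeasurable Y μ)
    (ha : Measurable a) (hc : Measurable c)
    (hi : Integrable (fun ω => checkFn u (Y ω - c (X ω)) - checkFn u (Y ω - a (X ω))) μ) :
    ∫ ω, (checkFn u (Y ω - c (X ω)) - checkFn u (Y ω - a (X ω))) ∂μ
      = ∫ ω, (∫ s in a (X ω)..c (X ω), (cdf (condDistrib Y X μ (X ω)) s - u)) ∂μ := by
  rw [integral_comp_eq_integral_condDistrib hX hY
    (stronglyMeasurable_checkFn_sub_checkFn u ha hc) hi]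
  simp_rw [integral_checkFn_sub_checkFn]

theorem integrable_integral_cdf_sub (hX : Measurable X) (hY : AEMeasurable Y μ)
    (ha : Measurable a) (hc : Measurable c)
    (hi : Integrable (fun ω => checkFn u (Y ω - c (X ω)) - checkFn u (Y ω - a (X ω))) μ) :
    Integrable (fun ω => ∫ s in a (X ω)..c (X ω), (cdf (condDistrib Y X μ (X ω)) s - u)) μ := by
  have := integrable_integral_condDistrib hX hY (stronglyMeasurable_checkFn_sub_checkFn u ha hc) hi
  simpa only [integral_checkFn_sub_checkFn] using this

end Conditioning

theorem integral_add_le_of_ae_le {Ω : Type*} [MeasurableSpace Ω] {μ : Measure Ω} {f g h : Ω → ℝ}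
    (hf : Integrable f μ) (hh : Integrable h μ) (hg : AEStronglyMeasurable g μ)
    (hg_nonneg : 0 ≤ᵐ[μ] g) (hle : ∀ᵐ ω ∂μ, f ω + g ω ≤ h ω) :
    ∫ ω, f ω ∂μ + ∫ ω, g ω ∂μ ≤ ∫ ω, h ω ∂μ := by
  have hg_int : Integrable g μ := by
    refine (hh.sub hf).mono' hg ?_
    filter_upwards [hg_nonneg, hle] with ω hω₀ hω
    rw [Real.norm_eq_abs, abs_of_nonneg hω₀, Pi.sub_apply]
    linarith
  rw [← integral_add hf hg_int]
  exact integral_mono_ae (hf.add hg_int) hh hle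

theorem integral_mul_inner_eq_zero {Ω E : Type*} [MeasurableSpace Ω] {μ : Measure Ω}
    [NormedAddCommGroup E] [InnerProductSpace ℝ E] [CompleteSpace E] {φ : Ω → ℝ} {X : Ω → E}
    (hX : Integrable X μ) (hφ : AEStronglyMeasurable φ μ) {K : ℝ} (hφK : ∀ᵐ ω ∂μ, ‖φ ω‖ ≤ K)
    (h : ∫ ω, φ ω • X ω ∂μ = 0) (v : E) :
    ∫ ω, φ ω * ⟪X ω, v⟫ ∂μ = 0 := by
  have hφX : Integrable (fun ω => φ ω • X ω) μ := hX.bdd_smul K hφ hφK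
  rw [← inner_zero_right v, ← h, ← integral_inner hφX]
  simp only [real_inner_smul_right, real_inner_comm]

theorem stmt17_general {Ω : Type*} [MeasurableSpace Ω] (μ : Measure Ω) [IsProbabilityMeasure μ]
    (d : ℕ) (X : Ω → EuclideanSpace ℝ (Fin d)) (Y : Ω → ℝ)
    (hX : Measurable X) (hY : Measurable Y)
    (F : ℝ → EuclideanSpace ℝ (Fin d) → ℝ) (s1 s2 : EuclideanSpace ℝ (Fin d) → ℝ)
    (u C2 C3 : ℝ) (hC2 : 0 < C2)
    (Γ : Set (EuclideanSpace ℝ (Fin d))) (γstar : EuclideanSpace ℝ (Fin d))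
    (hγstar : γstar ∈ Γ)
    -- F(·, x) is the conditional CDF of Y given X = x
    (hF : ∀ᵐ ω ∂μ, ∀ y : ℝ, (condDistrib Y X μ (X ω) (Iic y)).toReal = F y (X ω))
    -- density bounded below by C2 on the support
    (hdens : ∀ x, ∀ y1 y2 : ℝ, y1 ∈ Icc (s1 x) (s2 x) → y2 ∈ Icc (s1 x) (s2 x) →
      y1 ≤ y2 → C2 * (y2 - y1) ≤ F y2 x - F y1 x)
    -- indices Xᵀγ stay in the support for γ ∈ Γ
    (hsupp : ∀ᵐ ω ∂μ, ∀ γ ∈ Γ, ⟪X ω, γ⟫ ∈ Icc (s1 (X ω)) (s2 (X ω)))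
    -- smallest eigenvalue of E[X Xᵀ] bounded below by C3
    (heig : ∀ v : EuclideanSpace ℝ (Fin d), C3 * ‖v‖ ^ 2 ≤ ∫ ω, ⟪X ω, v⟫ ^ 2 ∂μ)
    -- integrability
    (hint : ∀ γ ∈ Γ, Integrable (fun ω => checkFn u (Y ω - ⟪X ω, γ⟫)) μ)
    (hintX : Integrable X μ)
    -- first-order condition
    (horth : ∫ ω, (F (⟪X ω, γstar⟫) (X ω) - u) • X ω ∂μ = 0) :
    ∀ γ ∈ Γ, C2 * C3 / 2 * ‖γ - γstar‖ ^ 2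
      ≤ ∫ ω, checkFn u (Y ω - ⟪X ω, γ⟫) ∂μ - ∫ ω, checkFn u (Y ω - ⟪X ω, γstar⟫) ∂μ := by
  intro γ hγ
  set κ := condDistrib Y X μ
  set t : Ω → ℝ := fun ω => ⟪X ω, γ - γstar⟫
  set φ : Ω → ℝ := fun ω => cdf (κ (X ω)) ⟪X ω, γstar⟫ - u
  have hcdf : ∀ᵐ ω ∂μ, ∀ y, cdf (κ (X ω)) y = F y (X ω) :=
    hF.mono fun ω h y => by rw [cdf_eq_real, measureReal_def, h]
  have hφ : AEStronglyMeasurable φ μ :=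
    (((measurable_cdf_apply κ (a := fun x => ⟪x, γstar⟫) (by fun_prop)).comp hX).sub_const u)
      |>.aestronglyMeasurable
  have hφ_bdd : ∀ᵐ ω ∂μ, ‖φ ω‖ ≤ 1 + |u| := .of_forall fun ω => abs_cdf_sub_le _ _ _
  have horth_φ : ∫ ω, φ ω * t ω ∂μ = 0 := by
    refine integral_mul_inner_eq_zero hintX hφ hφ_bdd (.trans (integral_congr_ae ?_) horth) _
    filter_upwards [hcdf] with ω hω using by simp only [φ, hω]
  have hpt : ∀ᵐ ω ∂μ, φ ω * t ω + C2 / 2 * t ω ^ 2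
      ≤ ∫ s in ⟪X ω, γstar⟫..⟪X ω, γ⟫, (cdf (κ (X ω)) s - u) := by
    filter_upwards [hcdf, hsupp] with ω hω hsuppω
    have hsub := uIcc_subset_Icc (hsuppω γstar hγstar) (hsuppω γ hγ)
    have := le_intervalIntegral_of_slope_ge (G := fun s => cdf (κ (X ω)) s - u) (C := C2)
      ((monotone_cdf _).intervalIntegrable.sub intervalIntegrable_const)
      fun y₁ hy₁ y₂ hy₂ h => by simpa [hω] using hdens (X ω) y₁ y₂ (hsub hy₁) (hsub hy₂) h
    simpa [t, φ, inner_sub_right, mul_comm] using this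
  have hgap_int := (hint γ hγ).sub (hint γstar hγstar)
  rw [← integral_sub (hint γ hγ) (hint γstar hγstar),
    integral_checkFn_sub_checkFn_eq_integral_cdf u hX hY.aemeasurable (a := fun x => ⟪x, γstar⟫)
      (c := fun x => ⟪x, γ⟫) (by fun_prop) (by fun_prop) hgap_int]
  calc C2 * C3 / 2 * ‖γ - γstar‖ ^ 2 = C2 / 2 * (C3 * ‖γ - γstar‖ ^ 2) := by ring
    _ ≤ C2 / 2 * ∫ ω, t ω ^ 2 ∂μ := by gcongr; exact heig _
    _ = ∫ ω, φ ω * t ω ∂μ + ∫ ω, C2 / 2 * t ω ^ 2 ∂μ := by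
      rw [horth_φ, integral_const_mul, zero_add]
    _ ≤ _ := integral_add_le_of_ae_le ((hintX.inner_const _).bdd_mul hφ hφ_bdd)
        (integrable_integral_cdf_sub u hX hY.aemeasurable (a := fun x => ⟪x, γstar⟫)
          (c := fun x => ⟪x, γ⟫) (by fun_prop) (by fun_prop) hgap_int)
        (by fun_prop) (.of_forall fun ω => by positivity) hpt

/-- Quadratic growth of the population quantile-regression risk: if `Y` given `X = x`
has CDF `F(·,x)` with density bounded below by `C2 > 0` on its support
`[s1 x, s2 x]`, the smallest eigenvalue of `E[X Xᵀ]` is at least `C3 > 0`, and `γ*`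
minimizes the population check-function risk over `Γ` with first-order condition
`E[(F(Xᵀγ*, X) − u) X] = 0`, then the risk gap at any `γ ∈ Γ` is at least
`(C2 C3 / 2) ‖γ − γ*‖²`. -/
theorem stmt17 {Ω : Type*} [MeasurableSpace Ω] (μ : Measure Ω) [IsProbabilityMeasure μ]
    (d : ℕ) (X : Ω → EuclideanSpace ℝ (Fin d)) (Y : Ω → ℝ)
    (hX : Measurable X) (hY : Measurable Y)
    (F : ℝ → EuclideanSpace ℝ (Fin d) → ℝ) (s1 s2 : EuclideanSpace ℝ (Fin d) → ℝ)
    (u C2 C3 : ℝ) (hu : u ∈ Ioo (0:ℝ) 1) (hC2 : 0 < C2) (hC3 : 0 < C3)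
    (Γ : Set (EuclideanSpace ℝ (Fin d))) (γstar : EuclideanSpace ℝ (Fin d))
    (hγstar : γstar ∈ Γ)
    -- F(·, x) is the conditional CDF of Y given X = x
    (hF : ∀ᵐ ω ∂μ, ∀ y : ℝ, (condDistrib Y X μ (X ω) (Iic y)).toReal = F y (X ω))
    -- density bounded below by C2 on the support
    (hdens : ∀ x, ∀ y1 y2 : ℝ, y1 ∈ Icc (s1 x) (s2 x) → y2 ∈ Icc (s1 x) (s2 x) →
      y1 ≤ y2 → C2 * (y2 - y1) ≤ F y2 x - F y1 x)
    -- indices Xᵀγ stay in the support for γ ∈ Γ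
    (hsupp : ∀ᵐ ω ∂μ, ∀ γ ∈ Γ, ⟪X ω, γ⟫ ∈ Icc (s1 (X ω)) (s2 (X ω)))
    -- smallest eigenvalue of E[X Xᵀ] bounded below by C3
    (heig : ∀ v : EuclideanSpace ℝ (Fin d), C3 * ‖v‖ ^ 2 ≤ ∫ ω, ⟪X ω, v⟫ ^ 2 ∂μ)
    -- integrability
    (hint : ∀ γ ∈ Γ, Integrable (fun ω => checkFn u (Y ω - ⟪X ω, γ⟫)) μ)
    (hintX : Integrable X μ)
    -- γ* minimizes the population risk over Γ
    (hmin : ∀ γ ∈ Γ, ∫ ω, checkFn u (Y ω - ⟪X ω, γstar⟫) ∂μ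
      ≤ ∫ ω, checkFn u (Y ω - ⟪X ω, γ⟫) ∂μ)
    -- first-order condition
    (horth : ∫ ω, (F (⟪X ω, γstar⟫) (X ω) - u) • X ω ∂μ = 0) :
    ∀ γ ∈ Γ, C2 * C3 / 2 * ‖γ - γstar‖ ^ 2
      ≤ ∫ ω, checkFn u (Y ω - ⟪X ω, γ⟫) ∂μ - ∫ ω, checkFn u (Y ω - ⟪X ω, γstar⟫) ∂μ :=
  stmt17_general μ d X Y hX hY F s1 s2 u C2 C3 hC2 Γ γstar hγstar hF hdens hsupp heig hint hintX
    horth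
end
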